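/- arXiv:0711.2391 — 3 statements merged into one kernel-verified Lean document; each statement's English description precedes it below -/
import Mathlib

section
/- Let ω ∈ R^d, β ≥ 0 and θ = β/(d+β). Set M_ω E^t to be the lattice basis whose row-vector exponents are: for k = (k̂, k_d) ∈ Z^d, the vector t k M_ω E^t = (e^{-t} k̂, e^{(d-1)t}(k·ω)) where E^t = diag(e^{-t},…,e^{-t},e^{(d-1)t}). If there exists C' > 0 such that inf_{k ∈ Z^d \ {0}} ‖t k M_ω E^t‖ > C' e^{-θ t} for all t ≥ 0, then ω is Diophantine with exponent β: there exists C > 0 with |ω·k| > C ‖k‖^{-(d-1+β)} for all k ∈ Z^d \ {0}. -/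
/-- Proposition 2.3 (one direction): if the shortest vector of the lattice
`M_ω E^t` satisfies `δ(Φ^t M_ω) > C' e^{-θt}` for all `t ≥ 0`, with
`θ = β/(d+β)`, then `ω` is Diophantine with exponent `β`. Here
`‖ᵗk M_ω E^t‖₁ = e^{-t}‖k̂‖₁ + e^{(d-1)t}|k·ω|` with `k̂` the first `d-1`
components of `k`. -/
theorem stmt_5 (d : ℕ) (hd : 2 ≤ d) (ω : Fin d → ℝ) (β : ℝ) (hβ : 0 ≤ β)
    (θ : ℝ) (hθ : θ = β / (d + β))
    (C' : ℝ) (hC' : 0 < C')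
    (h : ∀ t : ℝ, 0 ≤ t → ∀ k : Fin d → ℤ, k ≠ 0 →
      C' * Real.exp (-θ * t) <
        Real.exp (-t) *
            (∑ i ∈ Finset.univ.filter (fun i : Fin d => (i : ℕ) < d - 1), |(k i : ℝ)|) +
          Real.exp (((d : ℝ) - 1) * t) * |∑ i, (k i : ℝ) * ω i|) :
    ∃ C : ℝ, 0 < C ∧ ∀ k : Fin d → ℤ, k ≠ 0 →
      C * (∑ i, |(k i : ℝ)|) ^ (-(((d : ℝ) - 1) + β)) < |∑ i, (k i : ℝ) * ω i| := by
  set C'' := min C' 1 with hC''def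
  have hC''pos : 0 < C'' := lt_min hC' one_pos
  have hC''le1 : C'' ≤ 1 := min_le_right _ _
  have hC''leC' : C'' ≤ C' := min_le_left _ _
  have hd2 : (2:ℝ) ≤ (d:ℝ) := by exact_mod_cast hd
  have hdβ : 0 < (d:ℝ) + β := by linarith
  have h1θ : 1 - θ = (d:ℝ) / ((d:ℝ) + β) := by
    rw [hθ]; field_simp; ring
  have h1θpos : 0 < 1 - θ := by rw [h1θ]; positivity
  set e : ℝ := (d:ℝ) - 1 + β with he_def
  have hepos : 0 < e := by simp only [he_def]; linarith
  have hkey : (d:ℝ) - 1 + θ = e * (1 - θ) := by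
    rw [h1θ, hθ, he_def]; field_simp; ring
  have hhalf : 0 < C'' / 2 := by linarith
  refine ⟨(C''/2) * (C''/2) ^ e, by positivity, ?_⟩
  intro k hk
  set N : ℝ := ∑ i, |(k i : ℝ)| with hN_def
  have hN1 : 1 ≤ N := by
    obtain ⟨i, hi⟩ := Function.ne_iff.mp hk
    have h1 : (1:ℝ) ≤ |(k i : ℝ)| := by
      have : (1:ℤ) ≤ |k i| := Int.one_le_abs (by simpa using hi)
      calc (1:ℝ) ≤ |(k i : ℤ)| := by exact_mod_cast this
        _ = |(k i : ℝ)| := by push_cast; ring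
    exact h1.trans (Finset.single_le_sum (f := fun j => |(k j : ℝ)|)
      (fun j _ => abs_nonneg _) (Finset.mem_univ i))
  have hNpos : 0 < N := lt_of_lt_of_le one_pos hN1
  set X : ℝ := 2 * N / C'' with hX_def
  have hXpos : 0 < X := by positivity
  have hX1 : 1 ≤ X := by
    rw [hX_def, le_div_iff₀ hC''pos]; nlinarith
  set t : ℝ := Real.log X / (1 - θ) with ht_def
  have ht : 0 ≤ t := div_nonneg (Real.log_nonneg hX1) h1θpos.le
  have hexpX : Real.exp ((1 - θ) * t) = X := by
    rw [ht_def, mul_comm, div_mul_cancel₀ _ h1θpos.ne', Real.exp_log hXpos]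
  have hNX : N = C'' / 2 * X := by
    rw [hX_def]; field_simp
  -- the small-term bound
  have hS : (∑ i ∈ Finset.univ.filter (fun i : Fin d => (i : ℕ) < d - 1), |(k i : ℝ)|) ≤ N :=
    Finset.sum_le_sum_of_subset_of_nonneg (Finset.filter_subset _ _)
      (fun j _ _ => abs_nonneg _)
  have hsmall : Real.exp (-t) * N = C'' / 2 * Real.exp (-θ * t) := by
    rw [hNX, ← hexpX, mul_left_comm, ← Real.exp_add]
    congr 2
    ring
  have H := h t ht k hk
  set P : ℝ := |∑ i, (k i : ℝ) * ω i| with hP_def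
  have hbig : C'' / 2 * Real.exp (-θ * t) < Real.exp (((d:ℝ) - 1) * t) * P := by
    have h1 : C'' * Real.exp (-θ * t) ≤ C' * Real.exp (-θ * t) :=
      mul_le_mul_of_nonneg_right hC''leC' (Real.exp_pos _).le
    have h2 : Real.exp (-t) *
        (∑ i ∈ Finset.univ.filter (fun i : Fin d => (i : ℕ) < d - 1), |(k i : ℝ)|)
        ≤ C'' / 2 * Real.exp (-θ * t) := by
      calc _ ≤ Real.exp (-t) * N := by
              exact mul_le_mul_of_nonneg_left hS (Real.exp_pos _).le
        _ = _ := hsmall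
    have h4 : C'' * Real.exp (-θ * t) = C'' / 2 * Real.exp (-θ * t) + C'' / 2 * Real.exp (-θ * t) := by
      ring
    linarith
  -- divide by exp((d-1)t)
  have hP : C'' / 2 * Real.exp (-(((d:ℝ) - 1 + θ)) * t) < P := by
    have hA : (0:ℝ) < Real.exp (((d:ℝ) - 1) * t) := Real.exp_pos _
    have h3 : (C'' / 2 * Real.exp (-(((d:ℝ) - 1 + θ)) * t)) * Real.exp (((d:ℝ) - 1) * t)
        < P * Real.exp (((d:ℝ) - 1) * t) := by
      have hcomb : (C'' / 2 * Real.exp (-(((d:ℝ) - 1 + θ)) * t)) * Real.exp (((d:ℝ) - 1) * t)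
          = C'' / 2 * Real.exp (-θ * t) := by
        rw [mul_assoc, ← Real.exp_add]
        congr 2
        ring
      rw [hcomb, mul_comm P]
      exact hbig
    exact lt_of_mul_lt_mul_right h3 hA.le
  have hEE : Real.exp (-(((d:ℝ) - 1 + θ)) * t) = X ^ (-e) := by
    have : -(((d:ℝ) - 1 + θ)) * t = ((1 - θ) * t) * (-e) := by
      rw [hkey]; ring
    rw [this, Real.exp_mul, hexpX]
  have hXe : X ^ (-e) = (C'' / 2) ^ e * N ^ (-e) := by
    have hX' : X = N / (C'' / 2) := by rw [hNX]; field_simp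
    rw [hX', Real.div_rpow hNpos.le hhalf.le, Real.rpow_neg hNpos.le,
      Real.rpow_neg hhalf.le]
    have h5 : ((C'' / 2) ^ e : ℝ) ≠ 0 := by positivity
    field_simp
  have hfinal : C'' / 2 * (C'' / 2) ^ e * (N ^ (-e)) < P := by
    calc C'' / 2 * (C'' / 2) ^ e * (N ^ (-e))
        = C'' / 2 * (X ^ (-e)) := by rw [hXe]; ring
      _ = C'' / 2 * Real.exp (-(((d:ℝ) - 1 + θ)) * t) := by rw [hEE]
      _ < P := hP
  simpa [he_def, hN_def, hP_def] using hfinal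
end

section
/- Let ω ∈ R^d be Diophantine with exponent β ≥ 0, i.e. there exists C > 0 with |ω·k| > C ‖k‖^{-(d-1+β)} for all nonzero k ∈ Z^d. Let θ = β/(d+β). Then there exists C' > 0 such that for all t ≥ 0 and all nonzero k = (k̂,k_d) ∈ Z^d, max{ e^{-(1-θ)t} ‖k‖, e^{(d-1+θ)t} |k·ω| } > C'. In particular δ(Φ^t M_ω) > C' e^{-θt}. -/
/-- Proposition 2.3 (converse direction): if `ω` is Diophantine with exponent
`β ≥ 0` and `θ = β/(d+β)`, then there is `C' > 0` such that for all `t ≥ 0`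
and nonzero `k ∈ ℤ^d`,
`max{ e^{-(1-θ)t}‖k‖₁, e^{(d-1+θ)t}|k·ω| } > C'`,
which gives the lattice bound `δ(Φ^t M_ω) > C' e^{-θt}`. -/
theorem stmt_6 (d : ℕ) (hd : 2 ≤ d) (ω : Fin d → ℝ) (β : ℝ) (hβ : 0 ≤ β)
    (θ : ℝ) (hθ : θ = β / (d + β))
    (C : ℝ) (hC : 0 < C)
    (h : ∀ k : Fin d → ℤ, k ≠ 0 →
      C * (∑ i, |(k i : ℝ)|) ^ (-(((d : ℝ) - 1) + β)) < |∑ i, (k i : ℝ) * ω i|) :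
    ∃ C' : ℝ, 0 < C' ∧ ∀ t : ℝ, 0 ≤ t → ∀ k : Fin d → ℤ, k ≠ 0 →
      C' < max (Real.exp (-(1 - θ) * t) * ∑ i, |(k i : ℝ)|)
          (Real.exp (((d : ℝ) - 1 + θ) * t) * |∑ i, (k i : ℝ) * ω i|) := by
  have hd2 : (2:ℝ) ≤ (d:ℝ) := by exact_mod_cast hd
  have hdβ : (0:ℝ) < (d:ℝ) + β := by linarith
  set s : ℝ := (d:ℝ) - 1 + β with hs
  have hs1 : (1:ℝ) ≤ s := by simp only [hs]; linarith
  set C' : ℝ := min 1 (C/2) with hC'def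
  have hC'pos : 0 < C' := lt_min one_pos (by linarith)
  have hC'le1 : C' ≤ 1 := min_le_left _ _
  have hC'leC : C' ≤ C/2 := min_le_right _ _
  refine ⟨C', hC'pos, ?_⟩
  intro t ht k hk
  set N : ℝ := ∑ i, |(k i : ℝ)| with hN
  have hN1 : 1 ≤ N := by
    obtain ⟨i, hi⟩ := Function.ne_iff.mp hk
    have h1 : (1:ℝ) ≤ |(k i : ℝ)| := by
      have : 1 ≤ |k i| := Int.one_le_abs hi
      calc (1:ℝ) ≤ (|k i| : ℝ) := by exact_mod_cast this
        _ = |(k i : ℝ)| := rfl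
    calc (1:ℝ) ≤ |(k i : ℝ)| := h1
      _ ≤ N := Finset.single_le_sum (f := fun j => |(k j : ℝ)|)
            (fun j _ => abs_nonneg _) (Finset.mem_univ i)
  have hNpos : 0 < N := lt_of_lt_of_le one_pos hN1
  by_cases hcase : C' < Real.exp (-(1 - θ) * t) * N
  · exact lt_max_of_lt_left hcase
  push_neg at hcase
  refine lt_max_of_lt_right ?_
  have hE : (0:ℝ) < Real.exp ((1 - θ) * t) := Real.exp_pos _
  have hNle : N ≤ C' * Real.exp ((1 - θ) * t) := by
    have h2 := mul_le_mul_of_nonneg_right hcase hE.le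
    have h3 : Real.exp (-(1 - θ) * t) * Real.exp ((1 - θ) * t) = 1 := by
      rw [← Real.exp_add, show -(1 - θ) * t + (1 - θ) * t = 0 from by ring,
        Real.exp_zero]
    calc N = Real.exp (-(1 - θ) * t) * N * Real.exp ((1 - θ) * t) := by
            rw [mul_comm (Real.exp (-(1-θ)*t)) N, mul_assoc, h3, mul_one]
      _ ≤ C' * Real.exp ((1 - θ) * t) := h2
  have hrpow : (C' * Real.exp ((1 - θ) * t)) ^ (-s) ≤ N ^ (-s) :=
    Real.rpow_le_rpow_of_nonpos hNpos hNle (by linarith)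
  have hdio := h k hk
  have key : C * (C' * Real.exp ((1 - θ) * t)) ^ (-s) ≤ C * N ^ (-s) :=
    mul_le_mul_of_nonneg_left hrpow hC.le
  have hsplit : (C' * Real.exp ((1 - θ) * t)) ^ (-s)
      = C' ^ (-s) * Real.exp (-(1 - θ) * s * t) := by
    rw [Real.mul_rpow hC'pos.le hE.le, ← Real.exp_mul]
    congr 1
    ring
  have hexp : ((d:ℝ) - 1 + θ) = (1 - θ) * s := by
    rw [hθ, hs]
    field_simp
    ring
  have hCC' : C' < C * C' ^ (-s) := by
    rw [Real.rpow_neg hC'pos.le, mul_comm, inv_mul_eq_div,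
      lt_div_iff₀ (Real.rpow_pos_of_pos hC'pos s)]
    have h1 : C' ^ ((1:ℝ) + s) = C' ^ (1:ℝ) * C' ^ s := Real.rpow_add hC'pos 1 s
    calc C' * C' ^ s = C' ^ (1:ℝ) * C' ^ s := by rw [Real.rpow_one]
      _ = C' ^ ((1:ℝ) + s) := h1.symm
      _ ≤ C' ^ (1:ℝ) := Real.rpow_le_rpow_of_exponent_ge hC'pos hC'le1 (by linarith)
      _ = C' := Real.rpow_one _
      _ ≤ C/2 := hC'leC
      _ < C := by linarith
  calc C' < C * C' ^ (-s) := hCC'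
    _ = Real.exp (((d:ℝ) - 1 + θ) * t) * (C * (C' * Real.exp ((1 - θ) * t)) ^ (-s)) := by
        rw [hsplit, hexp]
        have e1 : Real.exp ((1 - θ) * s * t) * Real.exp (-(1 - θ) * s * t) = 1 := by
          rw [← Real.exp_add, show (1 - θ) * s * t + -(1 - θ) * s * t = 0 from by ring,
            Real.exp_zero]
        linear_combination (-(C * C' ^ (-s))) * e1
    _ ≤ Real.exp (((d:ℝ) - 1 + θ) * t) * (C * N ^ (-s)) :=
        mul_le_mul_of_nonneg_left key (Real.exp_nonneg _)
    _ < Real.exp (((d:ℝ) - 1 + θ) * t) * |∑ i, (k i : ℝ) * ω i| :=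
        mul_lt_mul_of_pos_left hdio (Real.exp_pos _)
end

section
/- Given a nonzero vector v ∈ R^d and σ > 0, define the resonant cone I_σ^+ = {k ∈ Z^d : |v·k| ≤ σ‖k‖}. Suppose 0 < δ ≤ ρ and ρ' satisfies ρ' ≤ ρ/A − δ, where A = sup_{k ∈ I_σ^+ \ {0}} ‖(T^{-1})^T k‖/‖k‖ for some T ∈ SL(d,Z). Then for any f in the space of Z^d-periodic analytic functions with Fourier support in I_σ^+ \ {0} and finite norm ‖f‖_ρ = Σ_k ‖f_k‖ e^{ρ‖k‖}, the composed function f ∘ T^{-1} satisfies ‖f ∘ T^{-1}‖'_{ρ'} ≤ (1 + 2π/δ) ‖f‖_ρ, where ‖g‖'_{ρ'} = Σ_k (1 + 2π‖k‖)‖g_k‖ e^{ρ'‖k‖}. -/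
open Matrix

/-- Lemma 4.3 (the rescaling estimate), at the level of Fourier coefficients.
`c k` stands for `‖f_k‖`; the support of `f` lies in the resonant cone
`I_σ⁺ \ {0}` with respect to `v`; composing with `x ↦ T⁻¹x` sends the mode `k`
to `(T⁻¹)ᵀ k`, whose size is controlled by `A` on the cone. If
`ρ' ≤ ρ/A − δ`, then `‖f ∘ T⁻¹‖'_{ρ'} ≤ (1 + 2π/δ) ‖f‖_ρ`. -/
theorem stmt_7 (d : ℕ) (v : Fin d → ℝ) (hv : v ≠ 0) (σ : ℝ) (hσ : 0 < σ)
    (T : Matrix (Fin d) (Fin d) ℤ) (hT : T.det = 1)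
    (c : (Fin d → ℤ) → ℝ) (hc : ∀ k, 0 ≤ c k)
    (ρ ρ' δ A : ℝ) (hδ : 0 < δ) (hA : 0 < A)
    (hAbound : ∀ k : Fin d → ℤ, k ≠ 0 →
      |∑ i, (k i : ℝ) * v i| ≤ σ * ∑ i, |(k i : ℝ)| →
      (∑ i, |(((T⁻¹)ᵀ.mulVec k) i : ℝ)|) ≤ A * ∑ i, |(k i : ℝ)|)
    (hρ'0 : 0 ≤ ρ') (hρ' : ρ' ≤ ρ / A - δ)
    (hsupp : ∀ k : Fin d → ℤ,
      (k = 0 ∨ σ * (∑ i, |(k i : ℝ)|) < |∑ i, (k i : ℝ) * v i|) → c k = 0)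
    (hsum : Summable fun k : Fin d → ℤ => c k * Real.exp (ρ * ∑ i, |(k i : ℝ)|)) :
    ∑' k : Fin d → ℤ,
        (1 + 2 * Real.pi * ∑ i, |(((T⁻¹)ᵀ.mulVec k) i : ℝ)|) * c k *
          Real.exp (ρ' * ∑ i, |(((T⁻¹)ᵀ.mulVec k) i : ℝ)|) ≤
      (1 + 2 * Real.pi / δ) *
        ∑' k : Fin d → ℤ, c k * Real.exp (ρ * ∑ i, |(k i : ℝ)|) := by
  set N : (Fin d → ℤ) → ℝ := fun k => ∑ i, |(((T⁻¹)ᵀ.mulVec k) i : ℝ)| with hNdef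
  set K : (Fin d → ℤ) → ℝ := fun k => ∑ i, |(k i : ℝ)| with hKdef
  have hNnn : ∀ k, 0 ≤ N k := fun k => Finset.sum_nonneg fun i _ => abs_nonneg _
  have hKnn : ∀ k, 0 ≤ K k := fun k => Finset.sum_nonneg fun i _ => abs_nonneg _
  have h1 : 0 < ρ / A := lt_of_lt_of_le hδ (by linarith)
  have hρpos : 0 < ρ := by
    have := mul_pos h1 hA
    rwa [div_mul_cancel₀ ρ hA.ne'] at this
  have hπ := Real.pi_pos
  have key : ∀ k, (1 + 2 * Real.pi * N k) * c k * Real.exp (ρ' * N k)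
      ≤ (1 + 2 * Real.pi / δ) * (c k * Real.exp (ρ * K k)) := by
    intro k
    rcases eq_or_lt_of_le (hc k) with h0 | h0
    · rw [← h0]
      have : (1 + 2 * Real.pi * N k) * 0 * Real.exp (ρ' * N k) = 0 := by ring
      rw [this]
      positivity
    · have hk : k ≠ 0 ∧ |∑ i, (k i : ℝ) * v i| ≤ σ * K k := by
        constructor
        · intro h; exact h0.ne' (hsupp k (Or.inl h))
        · by_contra h; exact h0.ne' (hsupp k (Or.inr (lt_of_not_ge h)))
      have hNA : N k ≤ A * K k := hAbound k hk.1 hk.2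
      have hexpo : ρ' * N k ≤ ρ * K k + (-(δ * N k)) := by
        have hmono : ρ' * N k ≤ (ρ / A - δ) * N k :=
          mul_le_mul_of_nonneg_right hρ' (hNnn k)
        have h2 : (ρ / A) * N k ≤ ρ * K k := by
          have h3 := mul_le_mul_of_nonneg_left hNA (le_of_lt h1)
          calc ρ / A * N k ≤ ρ / A * (A * K k) := h3
            _ = ρ * K k := by rw [← mul_assoc, div_mul_cancel₀ ρ hA.ne']
        nlinarith
      have hE1 : Real.exp (-(δ * N k)) ≤ 1 := by
        calc Real.exp (-(δ * N k)) ≤ Real.exp 0 := by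
              apply Real.exp_le_exp.mpr; nlinarith [hNnn k]
          _ = 1 := Real.exp_zero
      have hx : δ * N k * Real.exp (-(δ * N k)) ≤ 1 := by
        rw [Real.exp_neg, ← div_eq_mul_inv, div_le_one (Real.exp_pos _)]
        have := Real.add_one_le_exp (δ * N k); linarith
      have hNE : N k * Real.exp (-(δ * N k)) ≤ 1 / δ := by
        rw [le_div_iff₀ hδ]
        calc N k * Real.exp (-(δ * N k)) * δ
            = δ * N k * Real.exp (-(δ * N k)) := by ring
          _ ≤ 1 := hx
      have hfac : (1 + 2 * Real.pi * N k) * Real.exp (-(δ * N k))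
          ≤ 1 + 2 * Real.pi / δ := by
        have : (1 + 2 * Real.pi * N k) * Real.exp (-(δ * N k))
            = Real.exp (-(δ * N k)) + 2 * Real.pi * (N k * Real.exp (-(δ * N k))) := by
          ring
        rw [this]
        have h2 : 2 * Real.pi * (N k * Real.exp (-(δ * N k))) ≤ 2 * Real.pi * (1 / δ) :=
          mul_le_mul_of_nonneg_left hNE (by positivity)
        have : 2 * Real.pi * (1 / δ) = 2 * Real.pi / δ := by ring
        linarith [this ▸ h2]
      calc (1 + 2 * Real.pi * N k) * c k * Real.exp (ρ' * N k)
          ≤ (1 + 2 * Real.pi * N k) * c k * Real.exp (ρ * K k + (-(δ * N k))) := by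
            apply mul_le_mul_of_nonneg_left (Real.exp_le_exp.mpr hexpo)
            have := hNnn k; positivity
        _ = ((1 + 2 * Real.pi * N k) * Real.exp (-(δ * N k))) * (c k * Real.exp (ρ * K k)) := by
            rw [Real.exp_add]; ring
        _ ≤ (1 + 2 * Real.pi / δ) * (c k * Real.exp (ρ * K k)) := by
            apply mul_le_mul_of_nonneg_right hfac
            positivity
  have hsum' : Summable fun k : Fin d → ℤ =>
      (1 + 2 * Real.pi / δ) * (c k * Real.exp (ρ * K k)) := hsum.mul_left _
  have hls : Summable fun k : Fin d → ℤ =>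
      (1 + 2 * Real.pi * N k) * c k * Real.exp (ρ' * N k) := by
    apply Summable.of_nonneg_of_le (fun k => ?_) key hsum'
    have := hNnn k; have := hc k; positivity
  calc ∑' k, (1 + 2 * Real.pi * N k) * c k * Real.exp (ρ' * N k)
      ≤ ∑' k, (1 + 2 * Real.pi / δ) * (c k * Real.exp (ρ * K k)) :=
        Summable.tsum_le_tsum key hls hsum'
    _ = (1 + 2 * Real.pi / δ) * ∑' k, c k * Real.exp (ρ * K k) := tsum_mul_left
end
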